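/- arXiv:1904.08365 — 10 statements merged into one kernel-verified Lean document; each statement's English description precedes it below -/
import Mathlib

section
/- Let N ≥ 1 and let Π ⊆ ℤ_{≥0}^N be a finite, nonempty, monotone set. Let E denote the set of extreme points of conv(Π). If d⁰ ∈ E is a maximal element of E with respect to the componentwise order, then d⁰ is a maximal element of conv(Π). -/
/-!
Suppose `d₀ ≤ y` with `d₀ ≠ y` and `y ∈ conv Π`, and pick `i` with `d₀ i < y i`. Since `conv Π` is
a lower set of the nonnegative orthant, if `d₀ i > 0` then `d₀ ∓ t eᵢ ∈ conv Π` for small `t > 0`,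
contradicting extremality; so `d₀ i = 0`. Zeroing the `i`-th coordinate maps `conv Π` into itself
and sends the fibre over `d₀` to the extreme point `d₀`, so this fibre is a face of `conv Π`. It
contains `d₀` with its `i`-th coordinate raised to `y i`, so a point of the face maximizing the
`i`-th coordinate, which by Krein–Milman can be taken extreme, is an extreme point of `conv Π`
strictly above `d₀`.
-/

open Set Function

theorem isExtreme_inter_preimage_singleton {𝕜 E F : Type*} [Ring 𝕜] [PartialOrder 𝕜]
    [IsOrderedRing 𝕜] [AddCommGroup E] [Module 𝕜 E] [AddCommGroup F] [Module 𝕜 F] {f : E →ᵃ[𝕜] F}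
    {A : Set E} {B : Set F} (hf : MapsTo f A B) {p : F} (hp : p ∈ B.extremePoints 𝕜) :
    IsExtreme 𝕜 A (A ∩ f ⁻¹' {p}) := by
  refine ⟨inter_subset_left, fun x hx y hy z hz hzxy ↦ ⟨hx, ?_⟩⟩
  have hp_mem : p ∈ openSegment 𝕜 (f x) (f y) := by
    rw [← image_openSegment]
    exact ⟨z, hzxy, hz.2⟩
  exact hp.2 (hf hx) (hf hy) hp_mem

theorem IsCompact.exists_mem_extremePoints_isMaxOn {E : Type*} [AddCommGroup E] [Module ℝ E]
    [TopologicalSpace E] [T2Space E] [IsTopologicalAddGroup E] [ContinuousSMul ℝ E]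
    [LocallyConvexSpace ℝ E] {s : Set E} (hs : IsCompact s) (hne : s.Nonempty)
    (l : StrongDual ℝ E) : ∃ z ∈ s.extremePoints ℝ, IsMaxOn l s z := by
  obtain ⟨z, hzs, hz⟩ := hs.exists_isMaxOn hne l.continuous.continuousOn
  have hexp : IsExposed ℝ s (l.toExposed s) := ContinuousLinearMap.toExposed.isExposed
  obtain ⟨y, hy⟩ := (hexp.isCompact hs).extremePoints_nonempty ⟨z, hzs, fun w hw ↦ hz hw⟩
  exact ⟨y, hexp.isExtreme.extremePoints_subset_extremePoints hy, fun w hw ↦ hy.1.2 w hw⟩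

theorem LinearMap.mapsTo_convexHull {𝕜 E F : Type*} [Semiring 𝕜] [PartialOrder 𝕜]
    [AddCommMonoid E] [Module 𝕜 E] [AddCommMonoid F] [Module 𝕜 F]
    (f : E →ₗ[𝕜] F) {s : Set E} {t : Set F} (h : MapsTo f s t) :
    MapsTo f (convexHull 𝕜 s) (convexHull 𝕜 t) :=
  mapsTo_iff_image_subset.2 <|
    (f.image_convexHull s).trans_subset (convexHull_mono h.image_subset)

def LinearMap.updateZero (R : Type*) {ι : Type*} (M : ι → Type*) [Semiring R]
    [∀ j, AddCommMonoid (M j)] [∀ j, Module R (M j)] [DecidableEq ι] (i : ι) :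
    ((j : ι) → M j) →ₗ[R] ((j : ι) → M j) where
  toFun x := update x i 0
  map_add' x y := by rw [← update_add, add_zero]
  map_smul' c x := by rw [RingHom.id_apply, ← update_smul, smul_zero]

theorem update_mem_Icc {ι : Type*} {α : ι → Type*} [DecidableEq ι] [∀ j, Preorder (α j)]
    {a b x : (j : ι) → α j} {i : ι} {c : α i} (hx : x ∈ Icc a b) (hc : c ∈ Icc (a i) (b i)) :
    update x i c ∈ Icc a b :=
  ⟨le_update_iff.2 ⟨hc.1, fun j _ ↦ hx.1 j⟩, update_le_iff.2 ⟨hc.2, fun j _ ↦ hx.2 j⟩⟩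

section Orthant

variable {ι : Type*} [DecidableEq ι] {K : Set (ι → ℝ)}

theorem Convex.update_mem_of_mem_Icc {i : ι} (hK : Convex ℝ K) (hzero : MapsTo (update · i 0) K K)
    {x : ι → ℝ} (hx : x ∈ K) {c : ℝ} (hc : c ∈ Icc 0 (x i)) : update x i c ∈ K := by
  have hseg : update x i '' segment ℝ 0 (x i) = segment ℝ (update x i 0) x := by
    rw [Pi.image_update_segment, update_eq_self]
  rw [segment_eq_Icc (hc.1.trans hc.2)] at hseg
  exact hK.segment_subset (hzero hx) hx (hseg ▸ mem_image_of_mem _ hc)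

theorem Convex.Icc_zero_subset [Finite ι] (hK : Convex ℝ K)
    (hzero : ∀ i, MapsTo (update · i 0) K K) {x : ι → ℝ} (hx : x ∈ K) : Icc 0 x ⊆ K := by
  cases nonempty_fintype ι
  suffices h : ∀ s : Finset ι, ∀ x ∈ K, ∀ x' ∈ Icc 0 x, (∀ k ∉ s, x' k = x k) → x' ∈ K from
    fun x' hx' ↦ h Finset.univ x hx x' hx' (by simp)
  intro s
  induction s using Finset.induction_on with
  | empty =>
    intro x hx x' _ hx'x
    rwa [funext fun k ↦ hx'x k (Finset.notMem_empty k)]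
  | insert i s _ ih =>
    intro x hx x' hx' hx'x
    have hxi : update x i (x' i) ∈ K := hK.update_mem_of_mem_Icc (hzero i) hx ⟨hx'.1 i, hx'.2 i⟩
    refine ih _ hxi x' ⟨hx'.1, le_update_iff.2 ⟨le_rfl, fun j _ ↦ hx'.2 j⟩⟩ fun k hk ↦ ?_
    rcases eq_or_ne k i with rfl | hki
    · simp
    · simpa [hki] using hx'x k (by simp [hki, hk])

theorem eq_zero_of_mem_extremePoints_of_lt (hK0 : K ⊆ Ici 0)
    (hKlow : ∀ x ∈ K, Icc 0 x ⊆ K) {d y : ι → ℝ} (hd : d ∈ K.extremePoints ℝ)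
    (hy : y ∈ K) (hdy : d ≤ y) {i : ι} (hi : d i < y i) : d i = 0 := by
  by_contra hne
  have hd0 : 0 ≤ d := hK0 hd.1
  set t := min (d i) (y i - d i)
  have ht : 0 < t := lt_min ((hd0 i).lt_of_ne' hne) (sub_pos.2 hi)
  have hlo : update d i (d i - t) ∈ K :=
    hKlow d hd.1 <| update_mem_Icc ⟨hd0, le_rfl⟩
      ⟨sub_nonneg.2 (min_le_left _ _), sub_le_self _ ht.le⟩
  have hhi : update d i (d i + t) ∈ K :=
    hKlow y hy <| update_mem_Icc ⟨hd0, hdy⟩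
      ⟨add_nonneg (hd0 i) ht.le, le_sub_iff_add_le'.1 (min_le_right _ _)⟩
  have hseg : d ∈ openSegment ℝ (update d i (d i - t)) (update d i (d i + t)) := by
    rw [← Pi.image_update_openSegment]
    exact ⟨d i, mem_openSegment_sub_add _ _, update_eq_self i d⟩
  have hti := congrFun (hd.2 hlo hhi hseg) i
  simp only [update_self] at hti
  linarith

theorem maximal_of_maximal_extremePoints (hK0 : K ⊆ Ici 0) (hKlow : ∀ x ∈ K, Icc 0 x ⊆ K)
    (hKc : IsCompact K) {d : ι → ℝ}
    (hd : Maximal (· ∈ K.extremePoints ℝ) d) : Maximal (· ∈ K) d := by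
  refine ⟨hd.1.1, fun y hy hdy ↦ ?_⟩
  by_contra hyd
  obtain ⟨i, hi⟩ : ∃ i, d i < y i := (Pi.lt_def.1 (lt_of_le_not_ge hdy hyd)).2
  have hdi : d i = 0 := eq_zero_of_mem_extremePoints_of_lt hK0 hKlow hd.1 hy hdy hi
  let π := LinearMap.updateZero ℝ (fun _ : ι ↦ ℝ) i
  have hπ : MapsTo π K K := fun x hx ↦
    hKlow x hx <| update_mem_Icc ⟨hK0 hx, le_rfl⟩ ⟨le_rfl, hK0 hx i⟩
  set F := K ∩ π ⁻¹' {d}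
  have hF : IsExtreme ℝ K F := isExtreme_inter_preimage_singleton (f := π.toAffineMap) hπ hd.1
  have hFc : IsCompact F :=
    hKc.inter_right <| isClosed_singleton.preimage <| continuous_id.update i continuous_const
  have hw : update d i (y i) ∈ F :=
    ⟨hKlow y hy (update_mem_Icc ⟨hK0 hd.1.1, hdy⟩ ⟨hK0 hy i, le_rfl⟩),
      show update (update d i (y i)) i 0 = d by rw [update_idem, ← hdi, update_eq_self]⟩
  obtain ⟨z, hz, hzmax⟩ :=
    hFc.exists_mem_extremePoints_isMaxOn ⟨_, hw⟩ (ContinuousLinearMap.proj i)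
  have hdz : d ≤ z := by
    rw [← hz.1.2]
    exact update_le_iff.2 ⟨hK0 hz.1.1 i, fun _ _ ↦ le_rfl⟩
  have hzd : z i ≤ d i := hd.2 (hF.extremePoints_subset_extremePoints hz) hdz i
  have hyz : y i ≤ z i := by simpa using hzmax hw
  linarith

end Orthant

theorem extreme_maximal_is_maximal_in_hull_general
    (N : ℕ) (Sched : Set (Fin N → ℝ))
    (hfin : Sched.Finite)
    (hint : ∀ d ∈ Sched, ∀ i, ∃ m : ℕ, d i = (m : ℝ))
    (hmono : ∀ d ∈ Sched, ∀ d' : Fin N → ℝ,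
      (∀ i, ∃ m : ℕ, d' i = (m : ℝ)) → d' ≤ d → d' ∈ Sched)
    (d0 : Fin N → ℝ)
    (hd0E : d0 ∈ Set.extremePoints ℝ (convexHull ℝ Sched))
    (hd0max : ∀ y ∈ Set.extremePoints ℝ (convexHull ℝ Sched), d0 ≤ y → d0 = y) :
    ∀ y ∈ convexHull ℝ Sched, d0 ≤ y → d0 = y := by
  have hSched0 : Sched ⊆ Ici 0 := fun d hd i ↦ by
    obtain ⟨m, hm⟩ := hint d hd i
    simp [hm]
  have hzero : ∀ i, MapsTo (update · i 0) Sched Sched := fun i d hd ↦ by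
    refine hmono d hd _ (fun k ↦ ?_) (update_le_iff.2 ⟨hSched0 hd i, fun _ _ ↦ le_rfl⟩)
    rcases eq_or_ne k i with rfl | hki
    · exact ⟨0, by simp⟩
    · simpa [hki] using hint d hd k
  have hhull0 : convexHull ℝ Sched ⊆ Ici 0 := convexHull_min hSched0 (convex_Ici 0)
  have hhullLow : ∀ x ∈ convexHull ℝ Sched, Icc 0 x ⊆ convexHull ℝ Sched := fun x hx ↦
    (convex_convexHull ℝ Sched).Icc_zero_subset
      (fun i ↦ (LinearMap.updateZero ℝ (fun _ ↦ ℝ) i).mapsTo_convexHull (hzero i)) hx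
  have hmax :=
    maximal_of_maximal_extremePoints hhull0 hhullLow (hfin.isCompact_convexHull (𝕜 := ℝ))
    ⟨hd0E, fun y hy hd0y ↦ (hd0max y hy hd0y).ge⟩
  exact fun y hy hd0y ↦ le_antisymm hd0y (hmax.2 hy hd0y)

/-- If `d⁰` is an extreme point of `conv(Π)` (for a finite, nonempty,
monotone schedule set `Π ⊆ ℤ_{≥0}^N`) that is maximal among the extreme points
with respect to the componentwise order, then `d⁰` is maximal in `conv(Π)`. -/
theorem extreme_maximal_is_maximal_in_hull
    (N : ℕ) (hN : 1 ≤ N) (Sched : Set (Fin N → ℝ))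
    (hfin : Sched.Finite) (hne : Sched.Nonempty)
    (hint : ∀ d ∈ Sched, ∀ i, ∃ m : ℕ, d i = (m : ℝ))
    (hmono : ∀ d ∈ Sched, ∀ d' : Fin N → ℝ,
      (∀ i, ∃ m : ℕ, d' i = (m : ℝ)) → d' ≤ d → d' ∈ Sched)
    (d0 : Fin N → ℝ)
    (hd0E : d0 ∈ Set.extremePoints ℝ (convexHull ℝ Sched))
    (hd0max : ∀ y ∈ Set.extremePoints ℝ (convexHull ℝ Sched), d0 ≤ y → d0 = y) :
    ∀ y ∈ convexHull ℝ Sched, d0 ≤ y → d0 = y :=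
  extreme_maximal_is_maximal_in_hull_general N Sched hfin hint hmono d0 hd0E hd0max
end

section
/- Let N ≥ 1 and let Π ⊆ ℤ_{≥0}^N be a finite, nonempty, monotone set. Then Π has at least two distinct maximal elements (with respect to the componentwise order) if and only if conv(Π) has two distinct extreme points each of which is a maximal element of conv(Π). -/
/-!
Extreme points of `conv Π` lie in `Π`, and a point of `Π` maximal in `conv Π` is maximal in `Π`,
which gives one direction. Conversely, fix a strictly monotone linear functional `σ` (the
coordinate sum). For a monotone functional `l`, take the face of `conv Π` on which `l` is
maximal, inside it the face on which `σ` is maximal, and an extreme point `z` of the latter: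
`z` is extreme in `conv Π` (a face of a face is a face) and maximal there, since any `y ≥ z`
in `conv Π` lies in both faces and then `σ y = σ z` forces `y = z`. With `l = 0` this gives one
such point `z₁`. A second maximal element `d ≠ z₁` of `Π` exceeds `z₁` in some coordinate `j`,
and `l = x ↦ x j` gives a point `z₂` with `z₂ j ≥ d j > z₁ j`.
-/

open Set ContinuousLinearMap

lemma StrictMono.eq_of_isMaxOn_of_le {α β : Type*} [PartialOrder α] [Preorder β] {f : α → β}
    (hf : StrictMono f) {K : Set α} {z y : α} (hz : IsMaxOn f K z) (hy : y ∈ K) (hzy : z ≤ y) :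
    z = y := by
  by_contra hne
  exact (hz hy).not_gt (hf (lt_of_le_of_ne hzy hne))

lemma strictMono_sum_proj {ι : Type*} [Fintype ι] :
    StrictMono (∑ i, proj i : StrongDual ℝ (ι → ℝ)) := by
  intro x y hxy
  obtain ⟨hle, j, hj⟩ := Pi.lt_def.1 hxy
  simpa using Finset.sum_lt_sum (fun i _ => hle i) ⟨j, Finset.mem_univ j, hj⟩

theorem IsCompact.exists_mem_extremePoints_maximal_isMaxOn {E : Type*} [AddCommGroup E]
    [Module ℝ E] [TopologicalSpace E] [T2Space E] [IsTopologicalAddGroup E] [ContinuousSMul ℝ E]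
    [LocallyConvexSpace ℝ E] [PartialOrder E] {K : Set E} (hK : IsCompact K) (hne : K.Nonempty)
    {σ l : StrongDual ℝ E} (hσ : StrictMono σ) (hl : Monotone l) :
    ∃ z ∈ extremePoints ℝ K, (∀ y ∈ K, z ≤ y → z = y) ∧ IsMaxOn l K z := by
  set F := l.toExposed K
  have hF : IsCompact F := toExposed.isExposed.isCompact hK
  obtain ⟨x, hxK, hx⟩ := hK.exists_isMaxOn hne l.continuous.continuousOn
  obtain ⟨y, hyF, hy⟩ := hF.exists_isMaxOn ⟨x, hxK, isMaxOn_iff.1 hx⟩ σ.continuous.continuousOn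
  obtain ⟨z, hz⟩ := (toExposed.isExposed.isCompact hF).extremePoints_nonempty
    ⟨y, hyF, isMaxOn_iff.1 hy⟩
  have hzK : z ∈ extremePoints ℝ K :=
    (toExposed.isExposed.isExtreme.trans
      toExposed.isExposed.isExtreme).extremePoints_subset_extremePoints hz
  obtain ⟨⟨-, hzl⟩, hzσ⟩ := hz.1
  refine ⟨z, hzK, fun w hwK hzw => ?_, isMaxOn_iff.2 hzl⟩
  have hwF : w ∈ F := ⟨hwK, fun v hv => (hzl v hv).trans (hl hzw)⟩
  exact hσ.eq_of_isMaxOn_of_le (isMaxOn_iff.2 hzσ) hwF hzw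

theorem two_maximal_iff_two_maximal_extreme_general
    (N : ℕ) (Sched : Set (Fin N → ℝ))
    (hfin : Sched.Finite) :
    (∃ d₁ ∈ Sched, ∃ d₂ ∈ Sched, d₁ ≠ d₂ ∧
        (∀ y ∈ Sched, d₁ ≤ y → d₁ = y) ∧ (∀ y ∈ Sched, d₂ ≤ y → d₂ = y))
    ↔
    (∃ d₁ ∈ Set.extremePoints ℝ (convexHull ℝ Sched),
      ∃ d₂ ∈ Set.extremePoints ℝ (convexHull ℝ Sched), d₁ ≠ d₂ ∧
        (∀ y ∈ convexHull ℝ Sched, d₁ ≤ y → d₁ = y) ∧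
        (∀ y ∈ convexHull ℝ Sched, d₂ ≤ y → d₂ = y)) := by
  constructor
  · rintro ⟨d₁, hd₁, d₂, hd₂, hd₁₂, hmax₁, hmax₂⟩
    have hK : IsCompact (convexHull ℝ Sched) := hfin.isCompact_convexHull ℝ
    have hKne : (convexHull ℝ Sched).Nonempty := ⟨d₁, subset_convexHull ℝ Sched hd₁⟩
    obtain ⟨z₁, hz₁, hz₁max, -⟩ := hK.exists_mem_extremePoints_maximal_isMaxOn hKne
      strictMono_sum_proj (l := 0) fun _ _ _ => le_rfl
    obtain ⟨d, hd, hdmax, hdz⟩ : ∃ d ∈ Sched, (∀ y ∈ Sched, d ≤ y → d = y) ∧ d ≠ z₁ := by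
      rcases eq_or_ne d₁ z₁ with rfl | h
      exacts [⟨d₂, hd₂, hmax₂, hd₁₂.symm⟩, ⟨d₁, hd₁, hmax₁, h⟩]
    obtain ⟨j, hj⟩ : ∃ j, z₁ j < d j := by
      have : ¬d ≤ z₁ := fun h => hdz (hdmax z₁ (extremePoints_convexHull_subset hz₁) h)
      simpa [Pi.le_def] using this
    obtain ⟨z₂, hz₂, hz₂max, hz₂j⟩ := hK.exists_mem_extremePoints_maximal_isMaxOn hKne
      strictMono_sum_proj (l := proj j) fun _ _ h => h j
    refine ⟨z₁, hz₁, z₂, hz₂, ?_, hz₁max, hz₂max⟩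
    rintro rfl
    exact (hz₂j (subset_convexHull ℝ Sched hd)).not_gt hj
  · rintro ⟨e₁, he₁, e₂, he₂, he₁₂, hmax₁, hmax₂⟩
    exact ⟨e₁, extremePoints_convexHull_subset he₁, e₂, extremePoints_convexHull_subset he₂, he₁₂,
      fun y hy => hmax₁ y (subset_convexHull ℝ Sched hy),
      fun y hy => hmax₂ y (subset_convexHull ℝ Sched hy)⟩

/-- For a finite, nonempty, monotone set `Π ⊆ ℤ_{≥0}^N`, `Π` has at
least two distinct maximal elements (componentwise order) iff `conv(Π)` has two
distinct extreme points each of which is maximal in `conv(Π)`. -/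
theorem two_maximal_iff_two_maximal_extreme
    (N : ℕ) (hN : 1 ≤ N) (Sched : Set (Fin N → ℝ))
    (hfin : Sched.Finite) (hne : Sched.Nonempty)
    (hint : ∀ d ∈ Sched, ∀ i, ∃ m : ℕ, d i = (m : ℝ))
    (hmono : ∀ d ∈ Sched, ∀ d' : Fin N → ℝ,
      (∀ i, ∃ m : ℕ, d' i = (m : ℝ)) → d' ≤ d → d' ∈ Sched) :
    (∃ d₁ ∈ Sched, ∃ d₂ ∈ Sched, d₁ ≠ d₂ ∧
        (∀ y ∈ Sched, d₁ ≤ y → d₁ = y) ∧ (∀ y ∈ Sched, d₂ ≤ y → d₂ = y))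
    ↔
    (∃ d₁ ∈ Set.extremePoints ℝ (convexHull ℝ Sched),
      ∃ d₂ ∈ Set.extremePoints ℝ (convexHull ℝ Sched), d₁ ≠ d₂ ∧
        (∀ y ∈ convexHull ℝ Sched, d₁ ≤ y → d₁ = y) ∧
        (∀ y ∈ convexHull ℝ Sched, d₂ ≤ y → d₂ = y)) :=
  two_maximal_iff_two_maximal_extreme_general N Sched hfin
end

section
/- Let N ≥ 1, c > 0, and let D ⊆ ℝ_{≥0}^N be a finite set containing c·e^{(i)} for every i ∈ {1, …, N}. Let Q ∈ ℝ_{≥0}^N and let d* ∈ D maximize the inner product ⟨Q, d⟩ over d ∈ D. Let δ ∈ (0,1), let p : D → ℝ_{≥0} satisfy Σ_{d∈D} p_d ≤ 1 − δ, and let α ∈ ℝ_{≥0}^N satisfy α ≤ Σ_{d∈D} p_d d componentwise. Then ⟨α, Q⟩ ≤ (1 − δ)⟨d*, Q⟩, and consequently ⟨α, Q⟩ − ⟨d*, Q⟩ ≤ −δ c ‖Q‖_∞, where ‖Q‖_∞ = max_i Q_i. -/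
open Finset

/-- the key comparison step in the Foster–Lyapunov argument for the
generalized Max-Weight policy: if `α` is dominated by a sub-convex combination
`Σ p_d d` with `Σ p_d ≤ 1 − δ`, and `d*` maximizes `⟨Q, d⟩` over the finite
schedule set `D` (which contains `c·e⁽ⁱ⁾` for all `i`), then
`⟨α, Q⟩ ≤ (1 − δ)⟨d*, Q⟩` and `⟨α, Q⟩ − ⟨d*, Q⟩ ≤ −δ c ‖Q‖_∞`. -/
theorem maxweight_drift_comparison
    (N : ℕ) (hN : 1 ≤ N) (c : ℝ) (hc : 0 < c)
    (D : Finset (Fin N → ℝ)) (hDpos : ∀ d ∈ D, ∀ i, 0 ≤ d i)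
    (hunit : ∀ i : Fin N, Pi.single i c ∈ D)
    (Q : Fin N → ℝ) (hQ : ∀ i, 0 ≤ Q i)
    (dstar : Fin N → ℝ) (hdstar : dstar ∈ D)
    (hmax : ∀ d ∈ D, ∑ i, Q i * d i ≤ ∑ i, Q i * dstar i)
    (δ : ℝ) (hδ : δ ∈ Set.Ioo (0 : ℝ) 1)
    (p : (Fin N → ℝ) → ℝ) (hp : ∀ d, 0 ≤ p d)
    (hpsum : ∑ d ∈ D, p d ≤ 1 - δ)
    (α : Fin N → ℝ) (hα : ∀ i, 0 ≤ α i)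
    (hαle : ∀ i, α i ≤ ∑ d ∈ D, p d * d i) :
    (∑ i, α i * Q i ≤ (1 - δ) * ∑ i, dstar i * Q i) ∧
    (∑ i, α i * Q i - ∑ i, dstar i * Q i ≤
      -δ * c * (Finset.univ.sup'
        (Finset.univ_nonempty_iff.mpr (Fin.pos_iff_nonempty.mp hN)) Q)) := by
  set S := ∑ i, dstar i * Q i with hS
  have hScomm : S = ∑ i, Q i * dstar i := by
    simp [hS, mul_comm]
  have hSnn : 0 ≤ S := Finset.sum_nonneg fun i _ =>
    mul_nonneg (hDpos dstar hdstar i) (hQ i)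
  -- first part
  have h1 : ∑ i, α i * Q i ≤ (1 - δ) * S := by
    have step1 : ∑ i, α i * Q i ≤ ∑ i, (∑ d ∈ D, p d * d i) * Q i :=
      Finset.sum_le_sum fun i _ => mul_le_mul_of_nonneg_right (hαle i) (hQ i)
    have step2 : ∑ i, (∑ d ∈ D, p d * d i) * Q i = ∑ d ∈ D, p d * ∑ i, Q i * d i := by
      simp_rw [Finset.sum_mul, Finset.mul_sum]
      rw [Finset.sum_comm]
      congr 1; ext d
      congr 1; ext i; ring
    have step3 : ∑ d ∈ D, p d * ∑ i, Q i * d i ≤ ∑ d ∈ D, p d * S :=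
      Finset.sum_le_sum fun d hd => by
        rw [hScomm]; exact mul_le_mul_of_nonneg_left (hmax d hd) (hp d)
    have step4 : ∑ d ∈ D, p d * S = (∑ d ∈ D, p d) * S := by
      rw [Finset.sum_mul]
    have step5 : (∑ d ∈ D, p d) * S ≤ (1 - δ) * S :=
      mul_le_mul_of_nonneg_right hpsum hSnn
    calc ∑ i, α i * Q i ≤ _ := step1
      _ = _ := step2
      _ ≤ _ := step3
      _ = _ := step4
      _ ≤ _ := step5
  refine ⟨h1, ?_⟩
  -- sup' is attained
  set ne : (Finset.univ : Finset (Fin N)).Nonempty :=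
    Finset.univ_nonempty_iff.mpr (Fin.pos_iff_nonempty.mp hN)
  obtain ⟨j, _, hj⟩ := Finset.exists_mem_eq_sup' ne Q
  have hcQ : c * Q j ≤ S := by
    have := hmax (Pi.single j c) (hunit j)
    rw [← hScomm] at this
    have key : c * Q j = ∑ i, Q i * (Pi.single j c : Fin N → ℝ) i := by
      simp [Pi.single_apply, mul_ite, Finset.sum_ite_eq', mul_comm]
    rw [key]; exact this
  have hδpos : 0 < δ := hδ.1
  have : -δ * c * Finset.univ.sup' ne Q = -(δ * (c * Q j)) := by
    rw [hj]; ring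
  rw [this]
  nlinarith [h1, hcQ]
end

section
/- Let N ≥ 1 and let K ⊆ ℝ_{≥0}^N be a convex set possessing two distinct extreme points d⁽¹⁾ ≠ d⁽²⁾, each of which is a maximal element of K with respect to the componentwise order. Fix ε ∈ (0,1) and μ⁰ ∈ K, and define Γ⁺ = {λ ∈ ℝ_{≥0}^N : λ ≤ (1−ε)μ + εμ⁰ componentwise for some μ ∈ K}. Then Γ⁺ ≠ K. -/
/-!
If `Γ⁺ = K`, a maximal point `d` of `K` lies in `Γ⁺`, so `d ≤ (1 - ε) μ + ε μ⁰ ∈ K`, and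
maximality forces equality. Then `d` lies in the open segment between `μ` and `μ⁰`, so being
extreme it equals `μ⁰`. Two distinct maximal extreme points would both equal `μ⁰`.
-/

open Set

theorem eq_right_of_mem_extremePoints_of_le_combo {𝕜 E : Type*} [Ring 𝕜] [PartialOrder 𝕜]
    [IsOrderedRing 𝕜] [AddCommGroup E] [PartialOrder E] [Module 𝕜 E] {K : Set E}
    (hK : Convex 𝕜 K) {d μ ν : E} (hdE : d ∈ K.extremePoints 𝕜)
    (hdmax : ∀ y ∈ K, d ≤ y → d = y) (hμ : μ ∈ K) (hν : ν ∈ K) {ε : 𝕜} (hε : ε ∈ Ioo 0 1)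
    (hle : d ≤ (1 - ε) • μ + ε • ν) : d = ν := by
  obtain ⟨hε0, hε1⟩ := hε
  have hd : d = (1 - ε) • μ + ε • ν :=
    hdmax _ (hK hμ hν (sub_nonneg.2 hε1.le) hε0.le (sub_add_cancel 1 ε)) hle
  have hseg : d ∈ openSegment 𝕜 μ ν := ⟨1 - ε, ε, sub_pos.2 hε1, hε0, sub_add_cancel 1 ε, hd.symm⟩
  exact ((mem_extremePoints.1 hdE).2 μ hμ ν hν hseg).2.symm

theorem mixture_dominated_region_ne_general
    (N : ℕ) (K : Set (Fin N → ℝ)) (hK : Convex ℝ K)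
    (d₁ d₂ : Fin N → ℝ)
    (hd₁E : d₁ ∈ Set.extremePoints ℝ K) (hd₂E : d₂ ∈ Set.extremePoints ℝ K)
    (hne : d₁ ≠ d₂)
    (hd₁max : ∀ y ∈ K, d₁ ≤ y → d₁ = y)
    (hd₂max : ∀ y ∈ K, d₂ ≤ y → d₂ = y)
    (ε : ℝ) (hε : ε ∈ Set.Ioo (0 : ℝ) 1)
    (μ₀ : Fin N → ℝ) (hμ₀ : μ₀ ∈ K) :
    {l : Fin N → ℝ | (∀ i, 0 ≤ l i) ∧ ∃ μ ∈ K, l ≤ (1 - ε) • μ + ε • μ₀} ≠ K := by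
  intro hΓ
  have eq_μ₀ : ∀ d ∈ K.extremePoints ℝ, (∀ y ∈ K, d ≤ y → d = y) → d = μ₀ := by
    intro d hdE hdmax
    obtain ⟨-, μ, hμ, hle⟩ := hΓ.ge hdE.1
    exact eq_right_of_mem_extremePoints_of_le_combo hK hdE hdmax hμ hμ₀ hε hle
  exact hne ((eq_μ₀ d₁ hd₁E hd₁max).trans (eq_μ₀ d₂ hd₂E hd₂max).symm)

/-- if a convex set `K ⊆ ℝ_{≥0}^N` has two distinct extreme points
that are both maximal in `K` (componentwise order), then for any `ε ∈ (0,1)` and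
`μ⁰ ∈ K`, the region `Γ⁺` of nonnegative vectors dominated by some
`(1−ε)μ + εμ⁰` with `μ ∈ K` is strictly smaller than `K`: `Γ⁺ ≠ K`. -/
theorem mixture_dominated_region_ne
    (N : ℕ) (hN : 1 ≤ N) (K : Set (Fin N → ℝ)) (hK : Convex ℝ K)
    (hKpos : ∀ x ∈ K, ∀ i, 0 ≤ x i)
    (d₁ d₂ : Fin N → ℝ)
    (hd₁E : d₁ ∈ Set.extremePoints ℝ K) (hd₂E : d₂ ∈ Set.extremePoints ℝ K)
    (hne : d₁ ≠ d₂)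
    (hd₁max : ∀ y ∈ K, d₁ ≤ y → d₁ = y)
    (hd₂max : ∀ y ∈ K, d₂ ≤ y → d₂ = y)
    (ε : ℝ) (hε : ε ∈ Set.Ioo (0 : ℝ) 1)
    (μ₀ : Fin N → ℝ) (hμ₀ : μ₀ ∈ K) :
    {l : Fin N → ℝ | (∀ i, 0 ≤ l i) ∧ ∃ μ ∈ K, l ≤ (1 - ε) • μ + ε • μ₀} ≠ K :=
  mixture_dominated_region_ne_general N K hK d₁ d₂ hd₁E hd₂E hne hd₁max hd₂max ε hε μ₀ hμ₀
end

section
/- Let N ≥ 1 and let Π ⊆ ℤ_{≥0}^N be finite and monotone, contain c·e^{(i)} for every i ∈ {1, …, N} for some integer c ≥ 1, and have at least two distinct maximal elements. Let K = conv(Π) and Λ = {x ∈ ℝ_{≥0}^N : x_i < y_i for all i, for some y ∈ K}. Fix ε ∈ (0,1) and μ⁰ ∈ K, and set Γ⁺(μ⁰) = {λ ∈ ℝ_{≥0}^N : λ ≤ (1−ε)μ + εμ⁰ componentwise for some μ ∈ K}. Then the set {ρ > 0 : ρΛ ⊆ Γ⁺(μ⁰)} is nonempty and bounded above, and ρ(ε,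 μ⁰) := sup{ρ > 0 : ρΛ ⊆ Γ⁺(μ⁰)} satisfies ρ(ε, μ⁰) < 1. -/
open Pointwise

/-- The maximum capacity region `Λ`: nonnegative vectors strictly dominated
(componentwise) by some point of `conv(Π)`. -/
def maxCapRegion (N : ℕ) (Sched : Set (Fin N → ℝ)) : Set (Fin N → ℝ) :=
  {x | (∀ i, 0 ≤ x i) ∧ ∃ y ∈ convexHull ℝ Sched, ∀ i, x i < y i}

/-- The region `Γ⁺(μ⁰)`: nonnegative vectors dominated (componentwise) by
`(1−ε)μ + εμ⁰` for some `μ ∈ conv(Π)`. -/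
def mixRegion (N : ℕ) (Sched : Set (Fin N → ℝ)) (ε : ℝ) (μ₀ : Fin N → ℝ) :
    Set (Fin N → ℝ) :=
  {l | (∀ i, 0 ≤ l i) ∧ ∃ μ ∈ convexHull ℝ Sched, l ≤ (1 - ε) • μ + ε • μ₀}

/-- for a finite monotone schedule set containing `c·e⁽ⁱ⁾` for all
`i` and with two distinct maximal elements, for any `ε ∈ (0,1)` and
`μ⁰ ∈ conv(Π)`, the set `{ρ > 0 : ρΛ ⊆ Γ⁺(μ⁰)}` is nonempty, bounded above, and
its supremum `ρ(ε, μ⁰)` is strictly less than `1`. -/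
theorem capacity_shrinkage_lt_one
    (N : ℕ) (hN : 1 ≤ N) (Sched : Set (Fin N → ℝ))
    (hfin : Sched.Finite)
    (hint : ∀ d ∈ Sched, ∀ i, ∃ m : ℕ, d i = (m : ℝ))
    (hmono : ∀ d ∈ Sched, ∀ d' : Fin N → ℝ,
      (∀ i, ∃ m : ℕ, d' i = (m : ℝ)) → d' ≤ d → d' ∈ Sched)
    (c : ℕ) (hc : 1 ≤ c)
    (hunit : ∀ i : Fin N, Pi.single i (c : ℝ) ∈ Sched)
    (htwo : ∃ d₁ ∈ Sched, ∃ d₂ ∈ Sched, d₁ ≠ d₂ ∧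
      (∀ y ∈ Sched, d₁ ≤ y → d₁ = y) ∧ (∀ y ∈ Sched, d₂ ≤ y → d₂ = y))
    (ε : ℝ) (hε : ε ∈ Set.Ioo (0 : ℝ) 1)
    (μ₀ : Fin N → ℝ) (hμ₀ : μ₀ ∈ convexHull ℝ Sched) :
    {ρ : ℝ | 0 < ρ ∧ ρ • maxCapRegion N Sched ⊆ mixRegion N Sched ε μ₀}.Nonempty ∧
    BddAbove {ρ : ℝ | 0 < ρ ∧ ρ • maxCapRegion N Sched ⊆ mixRegion N Sched ε μ₀} ∧
    sSup {ρ : ℝ | 0 < ρ ∧ ρ • maxCapRegion N Sched ⊆ mixRegion N Sched ε μ₀} < 1 := by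
  obtain ⟨hε0, hε1⟩ := hε
  set S := {ρ : ℝ | 0 < ρ ∧ ρ • maxCapRegion N Sched ⊆ mixRegion N Sched ε μ₀} with hS
  -- elements of Sched are nonnegative
  have hSnn : ∀ d ∈ Sched, ∀ i, (0:ℝ) ≤ d i := by
    intro d hd i
    obtain ⟨m, hm⟩ := hint d hd i
    rw [hm]; exact Nat.cast_nonneg m
  -- elements of the hull are nonnegative
  have h0 : ∀ x ∈ convexHull ℝ Sched, ∀ i, (0:ℝ) ≤ x i := by
    intro x hx i
    have hconv : Convex ℝ {x : Fin N → ℝ | 0 ≤ x i} := by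
      intro a ha b hb s t hs ht hst
      simp only [Set.mem_setOf_eq, Pi.add_apply, Pi.smul_apply, smul_eq_mul] at *
      have h1 : 0 ≤ s * a i := mul_nonneg hs ha
      have h2 : 0 ≤ t * b i := mul_nonneg ht hb
      linarith
    exact convexHull_min (fun d hd => hSnn d hd i) hconv hx
  -- the coordinate-wise maximum vector M
  have hne : hfin.toFinset.Nonempty := ⟨_, hfin.mem_toFinset.2 (hunit ⟨0, hN⟩)⟩
  set M : Fin N → ℝ := fun i => hfin.toFinset.sup' hne (fun d => d i) with hMdef
  have hM_le : ∀ d ∈ Sched, ∀ i, d i ≤ M i := by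
    intro d hd i
    exact Finset.le_sup' (f := fun d => d i) (hfin.mem_toFinset.2 hd)
  have hM_mem : ∀ i, ∃ d ∈ Sched, d i = M i := by
    intro i
    obtain ⟨d, hd, hdi⟩ := Finset.exists_mem_eq_sup' hne (fun d => d i)
    exact ⟨d, hfin.mem_toFinset.1 hd, hdi.symm⟩
  -- hull is dominated by M
  have hleM : ∀ x ∈ convexHull ℝ Sched, ∀ i, x i ≤ M i := by
    intro x hx i
    have hconv : Convex ℝ {x : Fin N → ℝ | x i ≤ M i} := by
      intro a ha b hb s t hs ht hst
      simp only [Set.mem_setOf_eq, Pi.add_apply, Pi.smul_apply, smul_eq_mul] at *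
      have hm : (s + t) * M i = M i := by rw [hst, one_mul]
      nlinarith [mul_le_mul_of_nonneg_left ha hs, mul_le_mul_of_nonneg_left hb ht]
    exact convexHull_min (fun d hd => hM_le d hd i) hconv hx
  -- M is positive
  have hMpos : ∀ i, (0:ℝ) < M i := by
    intro i
    have h1 := hM_le _ (hunit i) i
    rw [Pi.single_eq_same] at h1
    have : (1:ℝ) ≤ (c:ℝ) := by exact_mod_cast hc
    linarith
  -- a strictly positive point of the hull
  have hu : ∃ u ∈ convexHull ℝ Sched, ∀ i, (0:ℝ) < u i := by
    refine ⟨Finset.centerMass Finset.univ (fun _ => (1:ℝ)) (fun i => Pi.single i (c:ℝ)),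
      Finset.centerMass_mem_convexHull _ (fun i _ => zero_le_one)
        (by
          have : (0:ℝ) < N := by exact_mod_cast hN
          simpa using this)
        (fun i _ => hunit i), ?_⟩
    intro j
    have hNpos : (0:ℝ) < N := by exact_mod_cast hN
    have hcpos : (0:ℝ) < c := by exact_mod_cast hc
    have : (Finset.centerMass Finset.univ (fun _ => (1:ℝ)) (fun i => Pi.single i (c:ℝ))) j
        = (N:ℝ)⁻¹ * c := by
      simp [Finset.centerMass, Finset.sum_apply, Pi.single_apply]
    rw [this]
    positivity
  obtain ⟨u, huK, hupos⟩ := hu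
  -- there is a coordinate where μ₀ is strictly below M
  have hex : ∃ i, μ₀ i < M i := by
    by_contra h
    push_neg at h
    have hμM : μ₀ = M := funext fun i => le_antisymm (hleM μ₀ hμ₀ i) (h i)
    -- then M ∈ convexHull, and by the support argument M ∈ Sched
    have hMhull : M ∈ convexHull ℝ Sched := hμM ▸ hμ₀
    rw [convexHull_eq] at hMhull
    obtain ⟨ι, t, w, z, hw0, hw1, hz, hcm⟩ := hMhull
    rw [Finset.centerMass_eq_of_sum_1 _ _ hw1] at hcm
    -- find j in t with w j > 0
    have hjex : ∃ j ∈ t, 0 < w j := by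
      by_contra hj
      push_neg at hj
      have : ∑ j ∈ t, w j = 0 :=
        Finset.sum_eq_zero fun j hjt => le_antisymm (hj j hjt) (hw0 j hjt)
      rw [hw1] at this; norm_num at this
    obtain ⟨j, hjt, hwj⟩ := hjex
    have hzjM : z j = M := by
      funext i
      -- ∑ w k * (M i - z k i) = 0 with nonneg terms
      have hsum : ∑ k ∈ t, w k * (M i - z k i) = 0 := by
        have h1 : ∑ k ∈ t, w k * (M i - z k i)
            = (∑ k ∈ t, w k) * M i - ∑ k ∈ t, w k * z k i := by
          simp only [mul_sub]
          rw [Finset.sum_sub_distrib, Finset.sum_mul]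
        have h2 : (∑ k ∈ t, w k • z k) i = ∑ k ∈ t, w k * z k i := by
          rw [Finset.sum_apply]
          exact Finset.sum_congr rfl fun k _ => rfl
        have h3 : M i = ∑ k ∈ t, w k * z k i := by rw [← h2, hcm]
        rw [h1, hw1, ← h3]; ring
      have hterm : ∀ k ∈ t, 0 ≤ w k * (M i - z k i) := fun k hkt =>
        mul_nonneg (hw0 k hkt) (by linarith [hM_le (z k) (hz k hkt) i])
      have := (Finset.sum_eq_zero_iff_of_nonneg hterm).1 hsum j hjt
      have hMz : M i - z j i = 0 := by
        rcases mul_eq_zero.1 this with h | h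
        · exact absurd h (ne_of_gt hwj)
        · exact h
      linarith [hMz]
    have hMS : M ∈ Sched := hzjM ▸ hz j hjt
    obtain ⟨d₁, hd₁, d₂, hd₂, hne12, hmax₁, hmax₂⟩ := htwo
    have h1 : d₁ = M := hmax₁ M hMS (fun i => hM_le d₁ hd₁ i)
    have h2 : d₂ = M := hmax₂ M hMS (fun i => hM_le d₂ hd₂ i)
    exact hne12 (h1.trans h2.symm)
  obtain ⟨i₀, hi₀⟩ := hex
  -- key bound for every ρ ∈ S
  have hbound : ∀ ρ ∈ S, ρ * M i₀ ≤ (1 - ε) * M i₀ + ε * μ₀ i₀ := by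
    rintro ρ ⟨hρ0, hρsub⟩
    obtain ⟨y, hyS, hyi⟩ := hM_mem i₀
    have hyK : y ∈ convexHull ℝ Sched := subset_convexHull ℝ Sched hyS
    -- for each δ ∈ (0,1), (1-δ)•y ∈ Λ
    have hkey : ∀ δ : ℝ, 0 < δ → δ < 1 →
        ρ * (1 - δ) * M i₀ ≤ (1 - ε) * M i₀ + ε * μ₀ i₀ := by
      intro δ hδ0 hδ1
      have hxΛ : (1 - δ) • y ∈ maxCapRegion N Sched := by
        refine ⟨fun i => ?_, (1 - δ) • y + δ • u, ?_, fun i => ?_⟩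
        · have := hSnn y hyS i
          have h2 : (0:ℝ) ≤ (1 - δ) * y i := mul_nonneg (by linarith) this
          exact h2
        · exact (convex_convexHull ℝ Sched) hyK huK (by linarith) (le_of_lt hδ0)
            (by ring)
        · have := hupos i
          simp only [Pi.add_apply, Pi.smul_apply, smul_eq_mul]
          nlinarith
      have hmem : ρ • ((1 - δ) • y) ∈ mixRegion N Sched ε μ₀ :=
        hρsub (Set.smul_mem_smul_set hxΛ)
      obtain ⟨-, μ, hμK, hleμ⟩ := hmem
      have h1 : (ρ • ((1 - δ) • y)) i₀ ≤ ((1 - ε) • μ + ε • μ₀) i₀ := hleμ i₀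
      simp only [Pi.add_apply, Pi.smul_apply, smul_eq_mul] at h1
      have h2 : μ i₀ ≤ M i₀ := hleM μ hμK i₀
      have h3 : ρ * ((1 - δ) * y i₀) ≤ (1 - ε) * M i₀ + ε * μ₀ i₀ := by nlinarith
      rw [hyi] at h3
      linarith [h3]
    -- pass to the limit δ → 0
    by_contra hc'
    push_neg at hc'
    set B := (1 - ε) * M i₀ + ε * μ₀ i₀ with hB
    set P := ρ * M i₀ with hP
    have hPpos : 0 < P := mul_pos hρ0 (hMpos i₀)
    have hBnn : 0 ≤ B := by
      have := h0 μ₀ hμ₀ i₀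
      have := le_of_lt (hMpos i₀)
      nlinarith
    have hδ0 : 0 < (P - B) / (2 * P) := by
      apply div_pos (by linarith) (by linarith)
    have hδ1 : (P - B) / (2 * P) < 1 := by
      rw [div_lt_one (by linarith)]
      linarith
    have := hkey _ hδ0 hδ1
    have heq : ρ * (1 - (P - B) / (2 * P)) * M i₀ = P - (P - B) / 2 := by
      field_simp
      ring
    rw [heq] at this
    linarith
  -- the bound ρ₀
  set ρ₀ : ℝ := 1 - ε * (M i₀ - μ₀ i₀) / M i₀ with hρ₀def
  have hρ₀lt1 : ρ₀ < 1 := by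
    have h1 : 0 < ε * (M i₀ - μ₀ i₀) / M i₀ :=
      div_pos (mul_pos hε0 (by linarith)) (hMpos i₀)
    rw [hρ₀def]
    linarith
  have hub : ∀ ρ ∈ S, ρ ≤ ρ₀ := by
    intro ρ hρ
    have h1 := hbound ρ hρ
    have h2 : ρ₀ * M i₀ = (1 - ε) * M i₀ + ε * μ₀ i₀ := by
      rw [hρ₀def]
      field_simp [ne_of_gt (hMpos i₀)]
      ring
    have h3 : ρ * M i₀ ≤ ρ₀ * M i₀ := by rw [h2]; exact h1
    exact le_of_mul_le_mul_right h3 (hMpos i₀)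
  -- nonemptiness: 1 - ε ∈ S
  have hneS : (1 - ε) ∈ S := by
    refine ⟨by linarith, ?_⟩
    rintro z ⟨x, ⟨hxnn, y, hyK, hxy⟩, rfl⟩
    refine ⟨fun i => ?_, y, hyK, fun i => ?_⟩
    · have : (0:ℝ) ≤ (1 - ε) * x i := mul_nonneg (by linarith) (hxnn i)
      exact this
    · have h1 : x i ≤ y i := le_of_lt (hxy i)
      have h2 : 0 ≤ μ₀ i := h0 μ₀ hμ₀ i
      simp only [Pi.add_apply, Pi.smul_apply, smul_eq_mul]
      nlinarith
  refine ⟨⟨1 - ε, hneS⟩, ⟨ρ₀, fun ρ hρ => hub ρ hρ⟩, ?_⟩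
  exact lt_of_le_of_lt (csSup_le ⟨1 - ε, hneS⟩ hub) hρ₀lt1
end

section
/- Let N ≥ 1 and let Π ⊆ ℤ_{≥0}^N be finite and monotone, contain c·e^{(i)} for every i ∈ {1, …, N} for some integer c ≥ 1, and have at least two distinct maximal elements. Let K = conv(Π), Λ = {x ∈ ℝ_{≥0}^N : x_i < y_i for all i, for some y ∈ K}, and for ε ∈ (0,1) and μ⁰ ∈ K let Γ⁺(μ⁰) = {λ ∈ ℝ_{≥0}^N : λ ≤ (1−ε)μ + εμ⁰ componentwise for some μ ∈ K} and ρ(ε, μ⁰) = sup{ρ > 0 : ρΛ ⊆ Γ⁺(μ⁰)}. Then for every ε ∈ (0,1) there exists a constant ρ(ε, Π) < 1, depending only on ε and Π, such that ρ(ε, μ⁰) ≤ ρ(ε, Π) for all μ⁰ ∈ K; equivalently, sup_{μ⁰ ∈ K} ρ(ε, μ⁰) < 1. -/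
open Pointwise

/-- The shrinkage factor `ρ(ε, μ⁰) = sup{ρ > 0 : ρΛ ⊆ Γ⁺(μ⁰)}`. -/
noncomputable def shrinkFactor (N : ℕ) (Sched : Set (Fin N → ℝ)) (ε : ℝ)
    (μ₀ : Fin N → ℝ) : ℝ :=
  sSup {ρ : ℝ | 0 < ρ ∧ ρ • maxCapRegion N Sched ⊆ mixRegion N Sched ε μ₀}

section ExtremePoints

variable {𝕜 E : Type*} [Ring 𝕜] [LinearOrder 𝕜]
  [AddCommGroup E] [PartialOrder E] [IsOrderedAddMonoid E] [Module 𝕜 E] [PosSMulStrictMono 𝕜 E]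

theorem mem_extremePoints_Iic (x : E) : x ∈ (Set.Iic x).extremePoints 𝕜 := by
  refine ⟨le_rfl, fun x₁ hx₁ x₂ hx₂ ⟨a, b, ha, hb, hab, hx⟩ => ?_⟩
  by_contra hne
  have : a • x₁ + b • x₂ < a • x + b • x :=
    add_lt_add_of_lt_of_le (smul_lt_smul_of_pos_left (lt_of_le_of_ne hx₁ hne) ha)
      (smul_le_smul_of_nonneg_left hx₂ hb.le)
  rw [← add_smul, hab, one_smul, hx] at this
  exact this.false

theorem mem_of_mem_upperBounds_of_mem_convexHull [IsStrictOrderedRing 𝕜] [DenselyOrdered 𝕜]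
    [Module.IsTorsionFree 𝕜 E] {s : Set E} {x : E} (hx : x ∈ upperBounds s)
    (hxs : x ∈ convexHull 𝕜 s) : x ∈ s :=
  extremePoints_convexHull_subset <|
    inter_extremePoints_subset_extremePoints_of_subset (convexHull_min hx (convex_Iic x))
      ⟨hxs, mem_extremePoints_Iic x⟩

end ExtremePoints

theorem exists_pos_mem_convexHull_of_single_mem {ι : Type*} [Fintype ι] [DecidableEq ι]
    [Nonempty ι] {S : Set (ι → ℝ)} {c : ℝ} (hc : 0 < c) (hS : ∀ i, Pi.single i c ∈ S) :
    ∃ u ∈ convexHull ℝ S, ∀ i, 0 < u i := by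
  refine ⟨∑ i, (Fintype.card ι : ℝ)⁻¹ • Pi.single i c,
    (convex_convexHull ℝ S).sum_mem (fun _ _ => by positivity) ?_
      fun i _ => subset_convexHull ℝ S (hS i), fun j => ?_⟩
  · simp [Finset.card_univ, Fintype.card_ne_zero]
  · simp only [Finset.sum_apply, Pi.smul_apply, Pi.single_apply, smul_eq_mul, mul_ite,
      mul_zero, Finset.sum_ite_eq, Finset.mem_univ, if_true]
    have := Fintype.card_pos (α := ι)
    positivity

theorem IsCompact.exists_lt_one_forall_exists_le_mul {ι : Type*} [Fintype ι]
    {K : Set (ι → ℝ)} (hK : IsCompact K) {M : ι → ℝ} (hM : ∀ k, 0 < M k)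
    (hMK : ∀ x ∈ K, ¬ M ≤ x) : ∃ s, 0 ≤ s ∧ s < 1 ∧ ∀ x ∈ K, ∃ k, x k ≤ s * M k := by
  rcases K.eq_empty_or_nonempty with rfl | ⟨x₀, hx₀⟩
  · exact ⟨0, le_rfl, one_pos, by simp⟩
  obtain ⟨k₀, -⟩ := not_forall.1 (show ¬ ∀ k, M k ≤ x₀ k from hMK x₀ hx₀)
  have hι : (Finset.univ : Finset ι).Nonempty := ⟨k₀, Finset.mem_univ _⟩
  let r : (ι → ℝ) → ℝ := fun x => Finset.univ.inf' hι fun k => x k / M k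
  have hr : Continuous r :=
    Continuous.finset_inf'_apply hι fun k _ => (continuous_apply k).div_const _
  obtain ⟨x₁, hx₁, hx₁max⟩ := hK.exists_isMaxOn ⟨x₀, hx₀⟩ hr.continuousOn
  have hr₁ : r x₁ < 1 := by
    by_contra! h
    refine hMK x₁ hx₁ fun k => ?_
    rw [← one_le_div (hM k)]
    exact (Finset.le_inf'_iff hι _).1 h k (Finset.mem_univ k)
  refine ⟨max (r x₁) 0, le_max_right _ _, max_lt hr₁ one_pos, fun x hx => ?_⟩
  obtain ⟨k, -, hk⟩ := Finset.exists_mem_eq_inf' hι fun k => x k / M k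
  refine ⟨k, (div_le_iff₀ (hM k)).1 ?_⟩
  exact hk ▸ (hx₁max hx).trans (le_max_left _ _)

section ShrinkFactor

variable {N : ℕ} {Sched : Set (Fin N → ℝ)}

theorem smul_mem_maxCapRegion {u y : Fin N → ℝ} (hu : u ∈ convexHull ℝ Sched)
    (hu₀ : ∀ i, 0 < u i) (hy : y ∈ convexHull ℝ Sched) (hy₀ : 0 ≤ y) {t : ℝ}
    (ht : t ∈ Set.Ico (0 : ℝ) 1) : t • y ∈ maxCapRegion N Sched := by
  obtain ⟨ht₀, ht₁⟩ := ht
  refine ⟨fun i => mul_nonneg ht₀ (hy₀ i), t • y + (1 - t) • u,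
    convex_convexHull ℝ Sched hy hu ht₀ (by linarith) (by ring), fun i => ?_⟩
  have := mul_pos (sub_pos.2 ht₁) (hu₀ i)
  simp only [Pi.add_apply, Pi.smul_apply, smul_eq_mul]
  linarith

theorem shrinkFactor_le_of_coord_le {ε s : ℝ} (hε : ε ∈ Set.Icc (0 : ℝ) 1) (hs : 0 ≤ s)
    {μ₀ y : Fin N → ℝ} {k : Fin N} (hyk : 0 < y k)
    (hmax : ∀ μ ∈ convexHull ℝ Sched, μ k ≤ y k) (hμ₀ : μ₀ k ≤ s * y k)
    (hyΛ : ∀ t ∈ Set.Ico (0 : ℝ) 1, t • y ∈ maxCapRegion N Sched) :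
    shrinkFactor N Sched ε μ₀ ≤ 1 - ε + ε * s := by
  obtain ⟨hε₀, hε₁⟩ := hε
  have hB : 0 ≤ 1 - ε + ε * s := by nlinarith
  refine Real.sSup_le (fun ρ ⟨hρ, hsub⟩ => ?_) hB
  have hscaled : ∀ t ∈ Set.Ico (0 : ℝ) 1, ρ * t ≤ 1 - ε + ε * s := by
    intro t ht
    obtain ⟨-, μ, hμ, hle⟩ := hsub (Set.smul_mem_smul_set (hyΛ t ht))
    have hlek : ρ * (t * y k) ≤ (1 - ε) * μ k + ε * μ₀ k := by simpa using hle k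
    have := hmax μ hμ
    refine le_of_mul_le_mul_right ?_ hyk
    nlinarith
  refine le_of_forall_lt_imp_le_of_dense fun a ha => ?_
  rcases lt_or_ge a 0 with ha₀ | ha₀
  · linarith
  · simpa [mul_div_cancel₀ a hρ.ne'] using
      hscaled (a / ρ) ⟨div_nonneg ha₀ hρ.le, (div_lt_one hρ).2 ha⟩

end ShrinkFactor

theorem uniform_capacity_shrinkage_lt_one_general
    (N : ℕ) (hN : 1 ≤ N) (Sched : Set (Fin N → ℝ))
    (hfin : Sched.Finite)
    (hint : ∀ d ∈ Sched, ∀ i, ∃ m : ℕ, d i = (m : ℝ))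
    (c : ℕ) (hc : 1 ≤ c)
    (hunit : ∀ i : Fin N, Pi.single i (c : ℝ) ∈ Sched)
    (htwo : ∃ d₁ ∈ Sched, ∃ d₂ ∈ Sched, d₁ ≠ d₂ ∧
      (∀ y ∈ Sched, d₁ ≤ y → d₁ = y) ∧ (∀ y ∈ Sched, d₂ ≤ y → d₂ = y))
    (ε : ℝ) (hε : ε ∈ Set.Ioo (0 : ℝ) 1) :
    ∃ ρbar : ℝ, ρbar < 1 ∧
      ∀ μ₀ ∈ convexHull ℝ Sched, shrinkFactor N Sched ε μ₀ ≤ ρbar := by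
  obtain ⟨d₁, hd₁, d₂, hd₂, hne, hmax₁, hmax₂⟩ := htwo
  have : Nonempty (Fin N) := ⟨⟨0, hN⟩⟩
  have hc₀ : (0 : ℝ) < c := by exact_mod_cast hc
  have hSched₀ : ∀ d ∈ Sched, 0 ≤ d := fun d hd i => by
    obtain ⟨m, hm⟩ := hint d hd i
    exact hm ▸ m.cast_nonneg
  choose top htop_mem htop using fun k =>
    Sched.exists_max_image (fun d => d k) hfin ⟨d₁, hd₁⟩
  set M : Fin N → ℝ := fun k => top k k
  have hM : M ∈ upperBounds Sched := fun d hd k => htop k d hd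
  have hMK : M ∉ convexHull ℝ Sched := fun h =>
    have hMS := mem_of_mem_upperBounds_of_mem_convexHull hM h
    hne <| (hmax₁ M hMS (hM hd₁)).trans (hmax₂ M hMS (hM hd₂)).symm
  have hKM : ∀ μ ∈ convexHull ℝ Sched, μ ≤ M := fun μ hμ => convexHull_min hM (convex_Iic M) hμ
  have hM₀ : ∀ k, 0 < M k := fun k => hc₀.trans_le (by simpa using htop k _ (hunit k))
  obtain ⟨s, hs₀, hs₁, hs⟩ :=
    (hfin.isCompact_convexHull (𝕜 := ℝ)).exists_lt_one_forall_exists_le_mul hM₀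
      fun x hx hMx => hMK (le_antisymm (hKM x hx) hMx ▸ hx)
  obtain ⟨u, hu, hu₀⟩ := exists_pos_mem_convexHull_of_single_mem hc₀ hunit
  refine ⟨1 - ε + ε * s, by nlinarith [hε.1], fun μ₀ hμ₀ => ?_⟩
  obtain ⟨k, hk⟩ := hs μ₀ hμ₀
  exact shrinkFactor_le_of_coord_le (y := top k) (Set.Ioo_subset_Icc_self hε) hs₀ (hM₀ k)
    (fun μ hμ => hKM μ hμ k) hk fun t ht =>
      smul_mem_maxCapRegion hu hu₀ (subset_convexHull ℝ _ (htop_mem k))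
        (hSched₀ _ (htop_mem k)) ht

/-- under the paper's assumptions on the schedule set, for every
`ε ∈ (0,1)` there is a uniform constant `ρ(ε, Π) < 1`, depending only on `ε` and
`Π`, bounding `ρ(ε, μ⁰)` for every `μ⁰ ∈ conv(Π)`. -/
theorem uniform_capacity_shrinkage_lt_one
    (N : ℕ) (hN : 1 ≤ N) (Sched : Set (Fin N → ℝ))
    (hfin : Sched.Finite)
    (hint : ∀ d ∈ Sched, ∀ i, ∃ m : ℕ, d i = (m : ℝ))
    (hmono : ∀ d ∈ Sched, ∀ d' : Fin N → ℝ,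
      (∀ i, ∃ m : ℕ, d' i = (m : ℝ)) → d' ≤ d → d' ∈ Sched)
    (c : ℕ) (hc : 1 ≤ c)
    (hunit : ∀ i : Fin N, Pi.single i (c : ℝ) ∈ Sched)
    (htwo : ∃ d₁ ∈ Sched, ∃ d₂ ∈ Sched, d₁ ≠ d₂ ∧
      (∀ y ∈ Sched, d₁ ≤ y → d₁ = y) ∧ (∀ y ∈ Sched, d₂ ≤ y → d₂ = y))
    (ε : ℝ) (hε : ε ∈ Set.Ioo (0 : ℝ) 1) :
    ∃ ρbar : ℝ, ρbar < 1 ∧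
      ∀ μ₀ ∈ convexHull ℝ Sched, shrinkFactor N Sched ε μ₀ ≤ ρbar :=
  uniform_capacity_shrinkage_lt_one_general N hN Sched hfin hint c hc hunit htwo ε hε
end

section
/- Let N ≥ 2, ε ∈ (0,1), and let Δ = {μ ∈ ℝ_{≥0}^N : Σ_{i=1}^N μ_i ≤ 1} and Λ = {λ ∈ ℝ_{≥0}^N : Σ_{i=1}^N λ_i < 1}. For any μ⁰ ∈ Δ, define Γ⁺(μ⁰) = {λ ∈ ℝ_{≥0}^N : λ ≤ (1−ε)μ + εμ⁰ componentwise for some μ ∈ Δ}. Then there exists an index i* ∈ {1, …, N} such that (1−ε)μ_{i*} + εμ⁰_{i*} ≤ 1 − ε(1 − 1/N) for every μ ∈ Δ, and consequently sup{ρ > 0 : ρΛ ⊆ Γ⁺(μ⁰)} ≤ 1 − ε(1 − 1/N). -/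
open Pointwise Finset

/-- for the single-server system with `N` parallel queues
(`Δ` the simplex of service rates, `Λ` the maximum capacity region), for any
fixed `μ⁰ ∈ Δ` there is a queue `i*` whose mixed service rate
`(1−ε)μ_{i*} + εμ⁰_{i*}` is at most `1 − ε(1 − 1/N)` for every `μ ∈ Δ`, and
consequently `sup{ρ > 0 : ρΛ ⊆ Γ⁺(μ⁰)} ≤ 1 − ε(1 − 1/N)`. -/
theorem single_server_capacity_factor_upper_bound
    (N : ℕ) (hN : 2 ≤ N) (ε : ℝ) (hε : ε ∈ Set.Ioo (0 : ℝ) 1)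
    (μ₀ : Fin N → ℝ) (hμ₀pos : ∀ i, 0 ≤ μ₀ i) (hμ₀sum : ∑ i, μ₀ i ≤ 1) :
    ∃ istar : Fin N,
      (∀ μ : Fin N → ℝ, (∀ i, 0 ≤ μ i) → ∑ i, μ i ≤ 1 →
        (1 - ε) * μ istar + ε * μ₀ istar ≤ 1 - ε * (1 - 1 / (N : ℝ))) ∧
      sSup {ρ : ℝ | 0 < ρ ∧
          ρ • {l : Fin N → ℝ | (∀ i, 0 ≤ l i) ∧ ∑ i, l i < 1} ⊆
            {l : Fin N → ℝ | (∀ i, 0 ≤ l i) ∧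
              ∃ μ : Fin N → ℝ, (∀ i, 0 ≤ μ i) ∧ ∑ i, μ i ≤ 1 ∧
                l ≤ (1 - ε) • μ + ε • μ₀}}
        ≤ 1 - ε * (1 - 1 / (N : ℝ)) := by
  obtain ⟨hε0, hε1⟩ := hε
  have hN0 : (0 : ℝ) < N := by positivity
  -- find istar with μ₀ istar ≤ 1/N
  have : Nonempty (Fin N) := ⟨⟨0, by omega⟩⟩
  have hne : (Finset.univ : Finset (Fin N)).Nonempty := Finset.univ_nonempty
  obtain ⟨istar, -, histar⟩ :=
    Finset.exists_le_of_sum_le hne (f := μ₀) (g := fun _ => 1 / (N : ℝ))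
      (by
        rw [Finset.sum_const, Finset.card_univ, Fintype.card_fin, nsmul_eq_mul]
        rw [mul_one_div, div_self (ne_of_gt hN0)]
        exact hμ₀sum)
  have hB : (0 : ℝ) ≤ 1 - ε * (1 - 1 / (N : ℝ)) := by
    have h1N : 0 < 1 / (N : ℝ) := by positivity
    nlinarith
  have key : ∀ μ : Fin N → ℝ, (∀ i, 0 ≤ μ i) → ∑ i, μ i ≤ 1 →
      (1 - ε) * μ istar + ε * μ₀ istar ≤ 1 - ε * (1 - 1 / (N : ℝ)) := by
    intro μ hpos hsum
    have hμ1 : μ istar ≤ 1 := by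
      have := Finset.single_le_sum (f := μ) (fun i _ => hpos i) (Finset.mem_univ istar)
      linarith
    nlinarith
  refine ⟨istar, key, ?_⟩
  apply Real.sSup_le _ hB
  rintro ρ ⟨hρ0, hsub⟩
  by_contra hcon
  push_neg at hcon
  set B := 1 - ε * (1 - 1 / (N : ℝ)) with hBdef
  set c := (B / ρ + 1) / 2 with hc
  have hBρ : B / ρ < 1 := (div_lt_one hρ0).mpr hcon
  have hc1 : c < 1 := by rw [hc]; linarith
  have hc0 : 0 ≤ c := by
    have : 0 ≤ B / ρ := div_nonneg hB hρ0.le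
    rw [hc]; linarith
  have hBc : B < ρ * c := by
    have : B = ρ * (B / ρ) := by field_simp
    rw [this]
    exact mul_lt_mul_of_pos_left (by rw [hc]; linarith) hρ0
  -- the vector c • e_istar
  set l : Fin N → ℝ := fun i => if i = istar then c else 0 with hl
  have hlmem : l ∈ {l : Fin N → ℝ | (∀ i, 0 ≤ l i) ∧ ∑ i, l i < 1} := by
    constructor
    · intro i; rw [hl]; dsimp only; split <;> simp [hc0]
    · rw [hl]; simp only [Finset.sum_ite_eq', Finset.mem_univ, if_true]; exact hc1
  have hmem : ρ • l ∈ ρ • {l : Fin N → ℝ | (∀ i, 0 ≤ l i) ∧ ∑ i, l i < 1} :=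
    Set.smul_mem_smul_set hlmem
  obtain ⟨-, μ, hμpos, hμsum, hle⟩ := hsub hmem
  have := hle istar
  simp only [Pi.add_apply, Pi.smul_apply, smul_eq_mul, hl, if_pos rfl] at this
  rw [if_pos trivial] at this
  have hb := key μ hμpos hμsum
  linarith
end

section
/- Let N ≥ 2 and ε ∈ (0,1). (i) For every λ ∈ ℝ_{≥0}^N with Σ_{i=1}^N λ_i < 1 − ε(1 − 1/N), there exists μ ∈ ℝ_{≥0}^N with Σ_{i=1}^N μ_i ≤ 1 such that λ_i ≤ (1−ε)μ_i + ε/N for every i. (ii) Consequently, with μ⁰ = (1/N, …, 1/N), Δ = {μ ∈ ℝ_{≥0}^N : Σ_i μ_i ≤ 1}, Λ = {λ ∈ ℝ_{≥0}^N : Σ_i λ_i < 1}, and Γ⁺(μ⁰) = {λ ∈ ℝ_{≥0}^N : λ ≤ (1−ε)μ + εμ⁰ componentwise for some μ ∈ Δ}, one has sup{ρ > 0 : ρΛ ⊆ Γ⁺(μ⁰)} = 1 − ε(1 − 1/N). -/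
open Pointwise Finset

private lemma key_dom (N : ℕ) (hN : 2 ≤ N) (ε : ℝ) (hε : ε ∈ Set.Ioo (0 : ℝ) 1) :
    ∀ l : Fin N → ℝ, (∀ i, 0 ≤ l i) → ∑ i, l i < 1 - ε * (1 - 1 / (N : ℝ)) →
      ∃ μ : Fin N → ℝ, (∀ i, 0 ≤ μ i) ∧ ∑ i, μ i ≤ 1 ∧
        ∀ i, l i ≤ (1 - ε) * μ i + ε / (N : ℝ) := by
  obtain ⟨hε0, hε1⟩ := hε
  intro l hl hsum
  have hN0 : (0:ℝ) < N := by exact_mod_cast Nat.pos_of_ne_zero (by omega)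
  set e : ℝ := ε / N with he_def
  have he : 0 < e := by positivity
  have h1ε : (0:ℝ) < 1 - ε := by linarith
  have hsum' : ∑ i, l i < (1 - ε) + e := by
    have : 1 - ε * (1 - 1 / (N : ℝ)) = (1 - ε) + ε / N := by ring
    rw [this] at hsum; exact hsum
  refine ⟨fun i => max (l i - e) 0 / (1 - ε), fun i => by positivity, ?_, ?_⟩
  · have hkey : ∑ i, max (l i - e) 0 ≤ 1 - ε := by
      by_cases hc : ∀ i, l i ≤ e
      · have : ∑ i, max (l i - e) 0 = 0 := by
          apply Finset.sum_eq_zero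
          intro i _
          simp [max_eq_right, sub_nonpos.mpr (hc i)]
        rw [this]; linarith
      · push_neg at hc
        obtain ⟨j, hj⟩ := hc
        have hle : ∑ i, max (l i - e) 0 ≤ ∑ i, (l i - if i = j then e else 0) := by
          apply Finset.sum_le_sum
          intro i _
          by_cases hij : i = j
          · subst hij
            rw [if_pos rfl]
            exact max_le le_rfl (by linarith)
          · simp only [if_neg hij, sub_zero]
            exact max_le (by linarith [he]) (hl i)
        have hrhs : ∑ i, (l i - if i = j then e else 0) = (∑ i, l i) - e := by
          rw [Finset.sum_sub_distrib, Finset.sum_ite_eq' Finset.univ j (fun _ => e)]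
          simp
        rw [hrhs] at hle
        linarith
    rw [← Finset.sum_div, div_le_one h1ε]
    exact hkey
  · intro i
    rw [mul_div_cancel₀ _ (ne_of_gt h1ε)]
    have := le_max_left (l i - e) 0
    linarith

/-- for the single-server system with `N` parallel queues and
`μ⁰ = (1/N, …, 1/N)`: (i) every nonnegative `λ` with `Σλ_i < 1 − ε(1 − 1/N)` is
dominated by `(1−ε)μ + (ε/N)𝟙` for some `μ` in the simplex `Δ`; (ii)
consequently `sup{ρ > 0 : ρΛ ⊆ Γ⁺(μ⁰)} = 1 − ε(1 − 1/N)`. -/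
theorem single_server_capacity_factor_achieved
    (N : ℕ) (hN : 2 ≤ N) (ε : ℝ) (hε : ε ∈ Set.Ioo (0 : ℝ) 1) :
    (∀ l : Fin N → ℝ, (∀ i, 0 ≤ l i) → ∑ i, l i < 1 - ε * (1 - 1 / (N : ℝ)) →
      ∃ μ : Fin N → ℝ, (∀ i, 0 ≤ μ i) ∧ ∑ i, μ i ≤ 1 ∧
        ∀ i, l i ≤ (1 - ε) * μ i + ε / (N : ℝ))
    ∧
    sSup {ρ : ℝ | 0 < ρ ∧
        ρ • {l : Fin N → ℝ | (∀ i, 0 ≤ l i) ∧ ∑ i, l i < 1} ⊆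
          {l : Fin N → ℝ | (∀ i, 0 ≤ l i) ∧
            ∃ μ : Fin N → ℝ, (∀ i, 0 ≤ μ i) ∧ ∑ i, μ i ≤ 1 ∧
              l ≤ (1 - ε) • μ + ε • (fun _ => 1 / (N : ℝ))}}
      = 1 - ε * (1 - 1 / (N : ℝ)) := by
  obtain ⟨hε0, hε1⟩ := hε
  have hN0 : (0:ℝ) < N := by exact_mod_cast Nat.pos_of_ne_zero (by omega)
  have hN1 : (1:ℝ) ≤ N := by
    have : (1:ℕ) ≤ N := by omega
    exact_mod_cast this
  have hinv : 0 < 1 / (N:ℝ) := by positivity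
  have hinv1 : 1 / (N:ℝ) ≤ 1 := by
    rw [div_le_one hN0]; exact hN1
  set c : ℝ := 1 - ε * (1 - 1 / (N : ℝ)) with hc_def
  have hc0 : 0 < c := by
    have h2 : ε * (1 - 1 / (N:ℝ)) ≤ 1 - 1 / (N:ℝ) :=
      mul_le_of_le_one_left (by linarith) (le_of_lt hε1)
    simp only [hc_def]
    linarith
  constructor
  · exact key_dom N hN ε ⟨hε0, hε1⟩
  · apply IsGreatest.csSup_eq
    constructor
    · -- c is in the set
      refine ⟨hc0, ?_⟩
      rintro x hx
      obtain ⟨l, ⟨hl0, hlsum⟩, rfl⟩ := hx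
      have hx0 : ∀ i, 0 ≤ (c • l) i := fun i => by
        have := hl0 i; simp only [Pi.smul_apply, smul_eq_mul]; positivity
      have hxsum : ∑ i, (c • l) i < c := by
        simp only [Pi.smul_apply, smul_eq_mul, ← Finset.mul_sum]
        nlinarith
      obtain ⟨μ, hμ0, hμsum, hμle⟩ := key_dom N hN ε ⟨hε0, hε1⟩ (c • l) hx0 hxsum
      refine ⟨hx0, μ, hμ0, hμsum, ?_⟩
      intro i
      simp only [Pi.add_apply, Pi.smul_apply, smul_eq_mul]
      have := hμle i
      rw [div_eq_mul_one_div] at this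
      exact this
    · -- c is an upper bound
      rintro ρ ⟨hρ0, hρsub⟩
      by_contra hlt
      push_neg at hlt
      -- pick a with c/ρ < a < 1
      have hcρ : c / ρ < 1 := (div_lt_one hρ0).mpr hlt
      set a : ℝ := (c / ρ + 1) / 2 with ha_def
      have ha0 : 0 ≤ a := by
        have : 0 < c / ρ := div_pos hc0 hρ0
        positivity
      have ha1 : a < 1 := by rw [ha_def]; linarith
      have hacρ : c / ρ < a := by rw [ha_def]; linarith
      have hca : c < ρ * a := by
        have := (div_lt_iff₀ hρ0).mp hacρ
        linarith [this]
      -- the test vector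
      set l : Fin N → ℝ := fun i => if i = ⟨0, by omega⟩ then a else 0 with hl_def
      have hlmem : l ∈ {l : Fin N → ℝ | (∀ i, 0 ≤ l i) ∧ ∑ i, l i < 1} := by
        constructor
        · intro i
          by_cases h : i = ⟨0, by omega⟩ <;> simp [hl_def, h, ha0]
        · rw [hl_def, Finset.sum_ite_eq' Finset.univ _ (fun _ => a)]
          simp [ha1]
      have hmem : ρ • l ∈ {l : Fin N → ℝ | (∀ i, 0 ≤ l i) ∧
            ∃ μ : Fin N → ℝ, (∀ i, 0 ≤ μ i) ∧ ∑ i, μ i ≤ 1 ∧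
              l ≤ (1 - ε) • μ + ε • (fun _ => 1 / (N : ℝ))} :=
        hρsub (Set.smul_mem_smul_set hlmem)
      obtain ⟨-, μ, hμ0, hμsum, hμle⟩ := hmem
      have h0 := hμle ⟨0, by omega⟩
      simp only [Pi.smul_apply, Pi.add_apply, smul_eq_mul, hl_def, if_pos rfl, ite_true] at h0
      have hμ0le : μ ⟨0, by omega⟩ ≤ 1 := by
        calc μ ⟨0, by omega⟩ ≤ ∑ i, μ i :=
              Finset.single_le_sum (fun i _ => hμ0 i) (Finset.mem_univ _)
          _ ≤ 1 := hμsum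
      have : ρ * a ≤ (1 - ε) * 1 + ε * (1 / N) := by
        have h1ε : (0:ℝ) ≤ 1 - ε := by linarith
        nlinarith [hμ0 ⟨0, by omega⟩]
      have hceq : (1 - ε) * 1 + ε * (1 / (N:ℝ)) = c := by rw [hc_def]; ring
      rw [hceq] at this
      linarith
end

section
/- Let N ≥ 1 and let Π ⊆ ℤ_{≥0}^N be a finite, nonempty, monotone set. If y ∈ conv(Π) and x ∈ ℝ_{≥0}^N satisfies x ≤ y componentwise, then x ∈ conv(Π); that is, conv(Π) is downward closed within the nonnegative orthant. -/
private lemma lower_coord {N : ℕ} (Sched : Set (Fin N → ℝ))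
    (hint : ∀ d ∈ Sched, ∀ i, ∃ m : ℕ, d i = (m : ℝ))
    (hmono : ∀ d ∈ Sched, ∀ d' : Fin N → ℝ,
      (∀ i, ∃ m : ℕ, d' i = (m : ℝ)) → d' ≤ d → d' ∈ Sched)
    (i : Fin N) (w : Fin N → ℝ) (hw : w ∈ convexHull ℝ Sched)
    (t : ℝ) (ht0 : 0 ≤ t) (htw : t ≤ w i) :
    Function.update w i t ∈ convexHull ℝ Sched := by
  set g : (Fin N → ℝ) → (Fin N → ℝ) := fun v j => if j = i then 0 else v j with hg
  have hglin : IsLinearMap ℝ g := by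
    constructor
    · intro a b; funext j; simp only [hg, Pi.add_apply]; split <;> simp
    · intro c a; funext j; simp only [hg, Pi.smul_apply, smul_eq_mul]; split <;> simp
  have himg : g '' Sched ⊆ Sched := by
    rintro _ ⟨d, hd, rfl⟩
    refine hmono d hd (g d) ?_ ?_
    · intro j
      by_cases h : j = i
      · exact ⟨0, by simp [hg, h]⟩
      · simpa [hg, h] using hint d hd j
    · intro j
      by_cases h : j = i
      · subst h
        obtain ⟨m, hm⟩ := hint d hd j
        simp only [hg, if_pos rfl, hm]
        positivity
      · simp [hg, h]
  have hgw : g w ∈ convexHull ℝ Sched := by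
    have : g w ∈ convexHull ℝ (g '' Sched) := by
      rw [← hglin.image_convexHull]
      exact Set.mem_image_of_mem g hw
    exact convexHull_mono himg this
  by_cases hwi : w i = 0
  · have ht : t = 0 := le_antisymm (hwi ▸ htw) ht0
    have : Function.update w i t = g w := by
      funext j; rw [Function.update_apply]
      by_cases h : j = i
      · subst h; simp [hg, ht]
      · simp [hg, h]
    rw [this]; exact hgw
  · have hwi' : 0 < w i := lt_of_le_of_ne (ht0.trans htw) (Ne.symm hwi)
    set s : ℝ := t / w i with hs
    have hs0 : 0 ≤ s := div_nonneg ht0 hwi'.le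
    have hs1 : s ≤ 1 := (div_le_one hwi').mpr htw
    have key : Function.update w i t = (1 - s) • g w + s • w := by
      funext j
      rw [Function.update_apply]
      by_cases h : j = i
      · simp [h, hg, hs]
        field_simp
      · simp [h, hg]
        ring
    rw [key]
    exact (convex_convexHull ℝ Sched) hgw hw (by linarith) hs0 (by ring)

/-- for a finite, nonempty, monotone set `Π ⊆ ℤ_{≥0}^N`, the
convex hull `conv(Π)` is downward closed within the nonnegative orthant: if
`y ∈ conv(Π)`, `x ≥ 0` and `x ≤ y` componentwise, then `x ∈ conv(Π)`. -/
theorem convexHull_monotone_downward_closed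
    (N : ℕ) (hN : 1 ≤ N) (Sched : Set (Fin N → ℝ))
    (hfin : Sched.Finite) (hne : Sched.Nonempty)
    (hint : ∀ d ∈ Sched, ∀ i, ∃ m : ℕ, d i = (m : ℝ))
    (hmono : ∀ d ∈ Sched, ∀ d' : Fin N → ℝ,
      (∀ i, ∃ m : ℕ, d' i = (m : ℝ)) → d' ≤ d → d' ∈ Sched)
    (y : Fin N → ℝ) (hy : y ∈ convexHull ℝ Sched)
    (x : Fin N → ℝ) (hx : ∀ i, 0 ≤ x i) (hxy : x ≤ y) :
    x ∈ convexHull ℝ Sched := by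
  set z : ℕ → (Fin N → ℝ) := fun k j => if (j : ℕ) < k then x j else y j with hz
  have hstep : ∀ k, z k ∈ convexHull ℝ Sched := by
    intro k
    induction k with
    | zero => simpa [hz] using hy
    | succ k ih =>
      by_cases hk : k < N
      · set i : Fin N := ⟨k, hk⟩ with hi
        have hupd : z (k + 1) = Function.update (z k) i (x i) := by
          funext j
          rw [Function.update_apply]
          by_cases h : j = i
          · simp [hz, h, hi]
          · have hne' : (j : ℕ) ≠ k := fun hc => h (Fin.ext hc)
            have : (j : ℕ) < k + 1 ↔ (j : ℕ) < k := by omega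
            simp [hz, h, this]
        rw [hupd]
        have hzki : z k i = y i := by simp [hz, hi]
        exact lower_coord Sched hint hmono i (z k) ih (x i) (hx i)
          (by rw [hzki]; exact hxy i)
      · have : z (k + 1) = z k := by
          funext j
          have : (j : ℕ) < k + 1 ↔ (j : ℕ) < k := by omega
          simp [hz, this]
        rw [this]; exact ih
  have hzN : z N = x := by
    funext j; simp [hz, j.isLt]
  rw [← hzN]; exact hstep N
end

section
/- Let N ≥ 1 and let Π ⊆ ℤ_{≥0}^N be finite and monotone, containing c·e^{(i)} for every i ∈ {1, …, N} for some integer c ≥ 1. Let Λ = {x ∈ ℝ_{≥0}^N : x_i < y_i for all i, for some y ∈ conv(Π)}. Then the closure of Λ in ℝ^N equals conv(Π). -/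
/-!
A point `z` with `0 ≤ z ≤ d` is a convex combination of the lattice points obtained by rounding
each coordinate of `z` down or up; when `d ∈ Π` these lie in `Π` by monotonicity, so `conv(Π)`
contains every box `[0, d]`, `d ∈ Π`. Rescaling the coordinates by factors in `[0, 1]` is a
linear map sending the union of these boxes into itself, hence `conv(Π)` is closed downwards in
the nonnegative orthant. Being compact, it therefore contains `cl(Λ)`.

Conversely, the barycentre `u` of the points `c·e⁽ⁱ⁾` has all coordinates positive, and for
`y ∈ conv(Π)` and `0 < t < 1` the point `t·y` lies strictly below `t·y + (1 - t)·u ∈ conv(Π)`.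
So the open segment from `0` to `y` lies in `Λ`, and `y` is in its closure.
-/

open Set

variable {ι : Type*}

def capacityRegion (K : Set (ι → ℝ)) : Set (ι → ℝ) :=
  {x | (∀ i, 0 ≤ x i) ∧ ∃ y ∈ K, ∀ i, x i < y i}

def IsNatPoint (d : ι → ℝ) : Prop :=
  ∀ i, ∃ m : ℕ, d i = m

theorem IsNatPoint.nonneg {d : ι → ℝ} (hd : IsNatPoint d) : 0 ≤ d := fun i => by
  obtain ⟨m, hm⟩ := hd i
  exact hm ▸ m.cast_nonneg

theorem mul_mem_convexHull {S : Set (ι → ℝ)} {θ : ι → ℝ} (hθ : ∀ d ∈ S, θ * d ∈ S)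
    {x : ι → ℝ} (hx : x ∈ convexHull ℝ S) : θ * x ∈ convexHull ℝ S := by
  have : θ * x ∈ convexHull ℝ (LinearMap.mulLeft ℝ θ '' S) := by
    rw [← LinearMap.image_convexHull]
    exact mem_image_of_mem _ hx
  exact convexHull_mono (image_subset_iff.2 hθ) this

theorem mem_convexHull_of_le_of_forall_mul_mem {S : Set (ι → ℝ)}
    (hS : ∀ d ∈ S, ∀ θ : ι → ℝ, 0 ≤ θ → θ ≤ 1 → θ * d ∈ S)
    {x y : ι → ℝ} (hy : y ∈ convexHull ℝ S) (hx : 0 ≤ x) (hxy : x ≤ y) :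
    x ∈ convexHull ℝ S := by
  have hy0 : 0 ≤ y := hx.trans hxy
  -- `x i / 0 = 0` is harmless: `y i = 0` forces `x i = 0`.
  have hθ : x / y * y = x := by
    funext i
    rcases eq_or_ne (y i) 0 with h | h
    · have hxi : x i = 0 := le_antisymm (by simpa [h] using hxy i) (hx i)
      simp [h, hxi]
    · simp [h]
  rw [← hθ]
  exact mul_mem_convexHull (fun d hd => hS d hd _ (fun i => div_nonneg (hx i) (hy0 i))
    fun i => div_le_one_of_le₀ (hxy i) (hy0 i)) hy

theorem mem_convexHull_pi_floor_ceil [Finite ι] {z : ι → ℝ} (hz : 0 ≤ z) :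
    z ∈ convexHull ℝ (univ.pi fun i => ({(⌊z i⌋₊ : ℝ), (⌈z i⌉₊ : ℝ)} : Set ℝ)) :=
  mem_convexHull_pi fun i _ => by
    rw [convexHull_pair, segment_eq_Icc (by exact_mod_cast Nat.floor_le_ceil (z i))]
    exact ⟨Nat.floor_le (hz i), Nat.le_ceil _⟩

theorem Icc_subset_convexHull_of_isNatPoint [Finite ι] {S : Set (ι → ℝ)}
    (hmono : ∀ d ∈ S, ∀ d', IsNatPoint d' → d' ≤ d → d' ∈ S)
    {d : ι → ℝ} (hd : d ∈ S) (hdnat : IsNatPoint d) : Icc 0 d ⊆ convexHull ℝ S := by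
  rintro z ⟨hz, hzd⟩
  refine convexHull_mono (fun p hp => hmono d hd p (fun i => ?_) fun i => ?_)
    (mem_convexHull_pi_floor_ceil hz)
  · rcases hp i trivial with h | h <;> exact ⟨_, h⟩
  · obtain ⟨m, hm⟩ := hdnat i
    rcases hp i trivial with h | h <;> rw [h]
    · exact (Nat.floor_le (hz i)).trans (hzd i)
    · rw [hm]
      exact Nat.cast_le.2 (Nat.ceil_le.2 (hm ▸ hzd i))

theorem mem_convexHull_of_le [Finite ι] {S : Set (ι → ℝ)} (hint : ∀ d ∈ S, IsNatPoint d)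
    (hmono : ∀ d ∈ S, ∀ d', IsNatPoint d' → d' ≤ d → d' ∈ S)
    {x y : ι → ℝ} (hy : y ∈ convexHull ℝ S) (hx : 0 ≤ x) (hxy : x ≤ y) :
    x ∈ convexHull ℝ S := by
  set T := {z : ι → ℝ | 0 ≤ z ∧ ∃ d ∈ S, z ≤ d}
  have hST : S ⊆ T := fun d hd => ⟨(hint d hd).nonneg, d, hd, le_rfl⟩
  have hTS : convexHull ℝ T ⊆ convexHull ℝ S :=
    convexHull_min (fun z ⟨hz, d, hd, hzd⟩ =>
      Icc_subset_convexHull_of_isNatPoint hmono hd (hint d hd) ⟨hz, hzd⟩) (convex_convexHull ℝ S)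
  have hT : ∀ z ∈ T, ∀ θ : ι → ℝ, 0 ≤ θ → θ ≤ 1 → θ * z ∈ T := by
    rintro z ⟨hz, d, hd, hzd⟩ θ hθ0 hθ1
    exact ⟨fun i => mul_nonneg (hθ0 i) (hz i), d, hd,
      fun i => (mul_le_of_le_one_left (hz i) (hθ1 i)).trans (hzd i)⟩
  exact hTS (mem_convexHull_of_le_of_forall_mul_mem hT (convexHull_mono hST hy) hx hxy)

theorem exists_forall_pos_mem_convexHull [Fintype ι] [DecidableEq ι] {S : Set (ι → ℝ)}
    (hS : S.Nonempty) {c : ℝ} (hc : 0 < c) (hunit : ∀ i, Pi.single i c ∈ S) :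
    ∃ u ∈ convexHull ℝ S, ∀ i, 0 < u i := by
  cases isEmpty_or_nonempty ι with
  | inl _ =>
    obtain ⟨u, hu⟩ := hS
    exact ⟨u, subset_convexHull ℝ S hu, isEmptyElim⟩
  | inr _ =>
    refine ⟨Finset.univ.centerMass (fun _ => 1) (fun i => Pi.single i c),
      Finset.centerMass_mem_convexHull _ (fun _ _ => zero_le_one) (by simp [Fintype.card_pos])
        fun i _ => hunit i, fun i => ?_⟩
    simp only [Finset.centerMass, Finset.sum_const, Finset.card_univ, nsmul_eq_mul, mul_one,
      one_smul, Pi.smul_apply, Finset.sum_apply, Pi.single_apply, Finset.sum_ite_eq,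
      Finset.mem_univ, ↓reduceIte, smul_eq_mul]
    exact mul_pos (inv_pos.2 (by exact_mod_cast Fintype.card_pos)) hc

theorem capacityRegion_subset {K : Set (ι → ℝ)}
    (hK : ∀ y ∈ K, ∀ x, 0 ≤ x → x ≤ y → x ∈ K) : capacityRegion K ⊆ K :=
  fun x ⟨hx, y, hy, hxy⟩ => hK y hy x hx fun i => (hxy i).le

theorem subset_closure_capacityRegion {K : Set (ι → ℝ)} (hK : Convex ℝ K)
    (hK0 : ∀ y ∈ K, 0 ≤ y) {u : ι → ℝ} (hu : u ∈ K) (hupos : ∀ i, 0 < u i) :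
    K ⊆ closure (capacityRegion K) := fun y hy => by
  have hseg : openSegment ℝ 0 y ⊆ capacityRegion K := by
    rintro _ ⟨a, b, ha, hb, hab, rfl⟩
    refine ⟨fun i => ?_, b • y + a • u, hK hy hu hb.le ha.le (by linarith), fun i => ?_⟩
    · simpa using mul_nonneg hb.le (hK0 y hy i)
    · simpa using mul_pos ha (hupos i)
  exact closure_mono hseg (segment_subset_closure_openSegment (right_mem_segment ℝ 0 y))

theorem closure_capacity_region_eq_convexHull_general
    (N : ℕ) (Sched : Set (Fin N → ℝ))
    (hfin : Sched.Finite)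
    (hint : ∀ d ∈ Sched, ∀ i, ∃ m : ℕ, d i = (m : ℝ))
    (hmono : ∀ d ∈ Sched, ∀ d' : Fin N → ℝ,
      (∀ i, ∃ m : ℕ, d' i = (m : ℝ)) → d' ≤ d → d' ∈ Sched)
    (c : ℕ) (hc : 1 ≤ c)
    (hunit : ∀ i : Fin N, Pi.single i (c : ℝ) ∈ Sched) :
    closure {x : Fin N → ℝ | (∀ i, 0 ≤ x i) ∧
        ∃ y ∈ convexHull ℝ Sched, ∀ i, x i < y i}
      = convexHull ℝ Sched := by
  change closure (capacityRegion (convexHull ℝ Sched)) = _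
  have hK0 : ∀ y ∈ convexHull ℝ Sched, 0 ≤ y :=
    fun y hy => convexHull_min (fun d hd => IsNatPoint.nonneg (hint d hd)) (convex_Ici 0) hy
  refine subset_antisymm (closure_minimal (capacityRegion_subset fun y hy x =>
    mem_convexHull_of_le hint hmono hy) (hfin.isClosed_convexHull ℝ)) fun y hy => ?_
  obtain ⟨u, hu, hupos⟩ := exists_forall_pos_mem_convexHull (convexHull_nonempty_iff.1 ⟨y, hy⟩)
    (by exact_mod_cast hc : (0 : ℝ) < c) hunit
  exact subset_closure_capacityRegion (convex_convexHull ℝ Sched) hK0 hu hupos hy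

/-- for a finite monotone set `Π ⊆ ℤ_{≥0}^N` containing `c·e⁽ⁱ⁾`
for every `i` (for some integer `c ≥ 1`), the closure of the maximum capacity
region `Λ = {x ≥ 0 : x < y componentwise for some y ∈ conv(Π)}` equals
`conv(Π)`. -/
theorem closure_capacity_region_eq_convexHull
    (N : ℕ) (hN : 1 ≤ N) (Sched : Set (Fin N → ℝ))
    (hfin : Sched.Finite)
    (hint : ∀ d ∈ Sched, ∀ i, ∃ m : ℕ, d i = (m : ℝ))
    (hmono : ∀ d ∈ Sched, ∀ d' : Fin N → ℝ,
      (∀ i, ∃ m : ℕ, d' i = (m : ℝ)) → d' ≤ d → d' ∈ Sched)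
    (c : ℕ) (hc : 1 ≤ c)
    (hunit : ∀ i : Fin N, Pi.single i (c : ℝ) ∈ Sched) :
    closure {x : Fin N → ℝ | (∀ i, 0 ≤ x i) ∧
        ∃ y ∈ convexHull ℝ Sched, ∀ i, x i < y i}
      = convexHull ℝ Sched :=
  closure_capacity_region_eq_convexHull_general N Sched hfin hint hmono c hc hunit
end
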